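/- arXiv:1904.03019 — 5 statements merged into one kernel-verified Lean document; each statement's English description precedes it below -/
import Mathlib

section
/- Let D = (V, E, w) be a vertex-weighted oriented graph, and let z be a leaf of D whose only incident edge is (y,z) (so N_D^-(z) = {y}). Then for every integer t ≥ 2, the colon ideal (I(D)^t : x_y · x_z^{w(z)}) equals I(D)^{t−1}. -/
open MvPolynomial

/-- The edge ideal of a vertex-weighted oriented graph with edge set `E` and
weight function `w`. -/
noncomputable def edgeIdeal (k : Type*) [Field k] {V : Type*} (E : Finset (V × V))
    (w : V → ℕ) : Ideal (MvPolynomial V k) :=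
  Ideal.span ((fun e : V × V => X e.1 * X e.2 ^ w e.2) '' (E : Set (V × V)))

namespace EdgeColonAux

set_option linter.unusedSectionVars false

variable {k : Type} [Field k] {V : Type} [DecidableEq V]

/-- exponent vector of the monomial generator attached to an edge -/
noncomputable def nu (w : V → ℕ) (e : V × V) : V →₀ ℕ :=
  Finsupp.single e.1 1 + Finsupp.single e.2 (w e.2)

lemma gen_eq (w : V → ℕ) (e : V × V) :
    (X e.1 * X e.2 ^ w e.2 : MvPolynomial V k) = monomial (nu w e) 1 := by
  rw [show (X e.1 : MvPolynomial V k) = X e.1 ^ 1 from (pow_one _).symm,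
    X_pow_eq_monomial, X_pow_eq_monomial, monomial_mul, one_mul, nu]

/-- exponent vectors of the degree `t` part generators -/
def Tset (E : Finset (V × V)) (w : V → ℕ) (t : ℕ) : Set (V →₀ ℕ) :=
  {d | ∃ m : Multiset (V × V), (∀ e ∈ m, e ∈ E) ∧ Multiset.card m = t ∧
    (m.map (nu w)).sum = d}

lemma edgeIdeal_eq (k : Type) [Field k] (E : Finset (V × V)) (w : V → ℕ) :
    edgeIdeal k E w
      = Ideal.span ((fun s => monomial s (1 : k)) '' (nu w '' (E : Set (V × V)))) := by
  rw [edgeIdeal, Set.image_image]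
  exact congrArg _ (Set.image_congr' (fun e => gen_eq w e))

lemma Tset_one (E : Finset (V × V)) (w : V → ℕ) :
    Tset E w 1 = nu w '' (E : Set (V × V)) := by
  ext d
  constructor
  · rintro ⟨m, hm, hc, rfl⟩
    obtain ⟨e, rfl⟩ := Multiset.card_eq_one.mp hc
    exact ⟨e, hm e (Multiset.mem_singleton_self e), by simp⟩
  · rintro ⟨e, he, rfl⟩
    exact ⟨{e}, by simpa using he, by simp, by simp⟩

lemma pow_eq (k : Type) [Field k] (E : Finset (V × V)) (w : V → ℕ) : ∀ n : ℕ,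
    (edgeIdeal k E w) ^ (n + 1)
      = Ideal.span ((fun s => monomial s (1 : k)) '' Tset E w (n + 1))
  | 0 => by rw [pow_one, edgeIdeal_eq, Tset_one]
  | (n + 1) => by
    rw [pow_succ, pow_eq k E w n, edgeIdeal_eq, Ideal.span_mul_span']
    congr 1
    ext p
    rw [Set.mem_mul]
    constructor
    · rintro ⟨a, ⟨da, ⟨ma, hma, hca, rfl⟩, rfl⟩, b, ⟨db, ⟨e, he, rfl⟩, rfl⟩, rfl⟩
      refine ⟨_, ⟨e ::ₘ ma, ?_, ?_, rfl⟩, ?_⟩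
      · intro e' he'
        rcases Multiset.mem_cons.mp he' with h | h
        · exact h ▸ he
        · exact hma e' h
      · simp [hca]
      · simp [monomial_mul, add_comm]
    · rintro ⟨d, ⟨m, hm, hc, rfl⟩, rfl⟩
      have hpos : 0 < Multiset.card m := by omega
      obtain ⟨e, he⟩ := Multiset.card_pos_iff_exists_mem.mp hpos
      refine ⟨monomial ((m.erase e).map (nu w)).sum 1,
        ⟨_, ⟨m.erase e, fun e' h => hm e' (Multiset.mem_of_mem_erase h),
          by rw [Multiset.card_erase_of_mem he, hc]; rfl, rfl⟩, rfl⟩,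
        monomial (nu w e) 1, ⟨_, ⟨e, hm e he, rfl⟩, rfl⟩, ?_⟩
      rw [monomial_mul, one_mul]
      congr 1
      conv_rhs => rw [← Multiset.cons_erase he]
      simp [add_comm]

/-- the key combinatorial lemma -/
lemma key (E : Finset (V × V)) (w : V → ℕ) (hw : ∀ v : V, 1 ≤ w v)
    (y z : V) (hzy : z ≠ y)
    (hleaf : ∀ e ∈ E, (e.1 = z ∨ e.2 = z) → e = (y, z))
    (t : ℕ) (ht : 1 ≤ t) (d : V →₀ ℕ)
    (m : Multiset (V × V)) (hm : ∀ e ∈ m, e ∈ E) (hc : Multiset.card m = t)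
    (hle : (m.map (nu w)).sum ≤ d + nu w (y, z)) :
    ∃ m' : Multiset (V × V), (∀ e ∈ m', e ∈ E) ∧ Multiset.card m' = t - 1 ∧
      (m'.map (nu w)).sum ≤ d := by
  classical
  by_cases hyzm : (y, z) ∈ m
  · refine ⟨m.erase (y, z), fun e h => hm e (Multiset.mem_of_mem_erase h),
      by rw [Multiset.card_erase_of_mem hyzm, hc]; rfl, ?_⟩
    have hsum : (m.map (nu w)).sum
        = nu w (y, z) + ((m.erase (y, z)).map (nu w)).sum := by
      conv_lhs => rw [← Multiset.cons_erase hyzm]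
      simp
    rw [hsum, add_comm] at hle
    exact le_of_add_le_add_right hle
  · -- no edge in m touches z
    have hz : ∀ e ∈ m, e.1 ≠ z ∧ e.2 ≠ z := by
      intro e he
      constructor <;> intro h <;>
        exact hyzm (hleaf e (hm e he) (by tauto) ▸ he)
    have hnuz : ∀ e ∈ m, nu w e z = 0 := by
      intro e he
      obtain ⟨h1, h2⟩ := hz e he
      simp [nu, Finsupp.single_apply, h1, h2]
    have happ : ∀ v : V, ((m.map (nu w)).sum) v
        = ((m.map (fun e => nu w e v)).sum) := by
      intro v
      have h := (Finsupp.applyAddHom v).map_multiset_sum (m.map (nu w))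
      simpa [Multiset.map_map, Function.comp] using h
    have hSz : ((m.map (nu w)).sum) z = 0 := by
      rw [happ]
      apply Multiset.sum_eq_zero
      intro x hx
      obtain ⟨e, he, rfl⟩ := Multiset.mem_map.mp hx
      exact hnuz e he
    have hle' : ∀ v : V, ((m.map (nu w)).sum) v ≤ d v + (nu w (y, z)) v :=
      fun v => hle v
    have hf0 : ∀ v : V, v ≠ y → v ≠ z → (nu w (y, z)) v = 0 := by
      intro v h1 h2
      simp [nu, Finsupp.single_apply, Ne.symm h1, Ne.symm h2]
    have hf0y : (nu w (y, z)) y = 1 := by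
      simp [nu, Finsupp.single_apply, hzy]
    by_cases hy : ((m.map (nu w)).sum) y ≤ d y
    · -- the whole product already divides d; drop any edge
      have hSd : (m.map (nu w)).sum ≤ d := by
        intro v
        by_cases h1 : v = y
        · exact h1 ▸ hy
        · by_cases h2 : v = z
          · subst h2; rw [hSz]; exact Nat.zero_le _
          · have := hle' v
            rwa [hf0 v h1 h2, add_zero] at this
      have hpos : 0 < Multiset.card m := by omega
      obtain ⟨e, he⟩ := Multiset.card_pos_iff_exists_mem.mp hpos
      refine ⟨m.erase e, fun e' h => hm e' (Multiset.mem_of_mem_erase h),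
        by rw [Multiset.card_erase_of_mem he, hc]; rfl, le_trans ?_ hSd⟩
      conv_rhs => rw [← Multiset.cons_erase he]
      simp [self_le_add_left]
    · -- need to drop an edge containing y
      push_neg at hy
      have hex : ∃ e ∈ m, (nu w e) y ≠ 0 := by
        by_contra hcon
        push_neg at hcon
        have : ((m.map (nu w)).sum) y = 0 := by
          rw [happ]
          apply Multiset.sum_eq_zero
          intro x hx
          obtain ⟨e, he, rfl⟩ := Multiset.mem_map.mp hx
          exact hcon e he
        omega
      obtain ⟨e, he, hey⟩ := hex
      have hsum : (m.map (nu w)).sum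
          = nu w e + ((m.erase e).map (nu w)).sum := by
        conv_lhs => rw [← Multiset.cons_erase he]
        simp
      refine ⟨m.erase e, fun e' h => hm e' (Multiset.mem_of_mem_erase h),
        by rw [Multiset.card_erase_of_mem he, hc]; rfl, ?_⟩
      intro v
      have hS'le : ∀ u : V, ((m.erase e).map (nu w)).sum u
          ≤ ((m.map (nu w)).sum) u := by
        intro u
        rw [hsum]
        simp [Finsupp.add_apply]
      by_cases h1 : v = y
      · rw [h1]
        have h2 := hle' y
        rw [hf0y] at h2
        have h3 : ((m.map (nu w)).sum) y
            = (nu w e) y + ((m.erase e).map (nu w)).sum y := by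
          rw [hsum]; simp [Finsupp.add_apply]
        omega
      · by_cases h2 : v = z
        · rw [h2]
          have := hS'le z
          omega
        · have := hS'le v
          have h4 := hle' v
          rw [hf0 v h1 h2, add_zero] at h4
          omega

end EdgeColonAux

open EdgeColonAux in
/-- **Lemma.** Let `D` be a vertex-weighted oriented graph and `z` a leaf whose only
incident edge is `(y, z)`.  Then `(I(D)^t : x_y x_z^{w_z}) = I(D)^{t-1}` for all
`t ≥ 2`. -/
theorem pow_edgeIdeal_colon_leafEdge
    (k : Type) [Field k] (V : Type) [DecidableEq V]
    (E : Finset (V × V)) (w : V → ℕ)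
    (hw : ∀ v : V, 1 ≤ w v)
    (hloop : ∀ e ∈ E, e.1 ≠ e.2)
    (y z : V) (hyz : (y, z) ∈ E)
    (hleaf : ∀ e ∈ E, (e.1 = z ∨ e.2 = z) → e = (y, z))
    (t : ℕ) (ht : 2 ≤ t) :
    ((edgeIdeal k E w) ^ t).colon (Ideal.span {X y * (X z : MvPolynomial V k) ^ w z})
      = (edgeIdeal k E w) ^ (t - 1) := by
  obtain ⟨n, rfl⟩ : ∃ n, t = n + 2 := ⟨t - 2, by omega⟩
  have hyzne : y ≠ z := hloop (y, z) hyz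
  have hgen : (X y * (X z : MvPolynomial V k) ^ w z) = monomial (nu w (y, z)) 1 :=
    gen_eq w (y, z)
  have h21 : n + 2 - 1 = n + 1 := rfl
  apply le_antisymm
  · intro g hg
    rw [Ideal.mem_colon_span_singleton] at hg
    rw [h21, pow_eq]
    rw [show n + 2 = (n + 1) + 1 from rfl, pow_eq, hgen] at hg
    rw [mem_ideal_span_monomial_image] at hg ⊢
    intro d hd
    have hd' : d + nu w (y, z) ∈ (g * monomial (nu w (y, z)) 1).support := by
      rw [mem_support_iff, coeff_mul_monomial']
      simp only [le_add_iff_nonneg_left, zero_le, if_true, add_tsub_cancel_right, mul_one]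
      exact mem_support_iff.mp hd
    obtain ⟨si, ⟨mm, hmm, hcc, rfl⟩, hsile⟩ := hg _ hd'
    obtain ⟨m', h1, h2, h3⟩ := key E w hw y z (Ne.symm hyzne) hleaf (n + 2) (by omega)
      d mm hmm hcc hsile
    exact ⟨_, ⟨m', h1, h2, rfl⟩, h3⟩
  · intro g hg
    rw [Ideal.mem_colon_span_singleton]
    have hf : (X y * (X z : MvPolynomial V k) ^ w z) ∈ edgeIdeal k E w :=
      Ideal.subset_span ⟨(y, z), hyz, rfl⟩
    rw [h21] at hg
    rw [show n + 2 = (n + 1) + 1 from rfl, pow_succ]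
    exact Ideal.mul_mem_mul hg hf
end

section
/- Let D = (V, E, w) be a vertex-weighted oriented graph, and let z be a leaf of D whose only incident edge is (y,z) (so N_D^-(z) = {y}). Then for every integer t ≥ 2, the ideals ((I(D)^t : x_z^{w(z)}), x_y), ((I(D∖y)^t : x_z^{w(z)}), x_y) and (I(D∖y)^t, x_y) of S all coincide. -/
/-!
Write `J` for the edge ideal of `D ∖ y`. Every edge of `D` through `y` has a generator divisible
by `x_y` (as `w(y) ≥ 1`), so `J ≤ I(D) ≤ J + (x_y)` and hence `J^t ≤ I(D)^t ≤ J^t + (x_y)`.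
Since `z` is a leaf hanging off `y`, neither `J` nor `x_y` involves `x_z`: viewed as polynomials
in `x_z`, the ideal `J^t + (x_y)` is generated by constants, so membership is tested
coefficientwise and `(J^t + (x_y) : x_z^n) = J^t + (x_y)`. Squeezing the two colon ideals between
`J^t + (x_y)` and its colon ideal shows that all three ideals equal `J^t + (x_y)`.
-/

open MvPolynomial

theorem Ideal.sup_pow_le_pow_sup {R : Type*} [CommSemiring R] (I J : Ideal R) :
    ∀ t : ℕ, (I ⊔ J) ^ t ≤ I ^ t ⊔ J
  | 0 => by simp
  | t + 1 => calc
      (I ⊔ J) ^ (t + 1) ≤ (I ^ t ⊔ J) * (I ⊔ J) := by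
        rw [pow_succ]; exact Ideal.mul_mono_left (sup_pow_le_pow_sup I J t)
      _ ≤ I ^ (t + 1) ⊔ J := by
        rw [Ideal.mul_sup, Ideal.sup_mul, pow_succ]
        exact sup_le (sup_le_sup_left Ideal.mul_le_left _) (le_sup_of_le_right Ideal.mul_le_right)

theorem Ideal.colon_sup_eq_of_le_of_le_sup {R : Type*} [CommRing R] {P J Y : Ideal R}
    {F : Set R} (hJP : J ≤ P) (hPJ : P ≤ J ⊔ Y) (hsat : (J ⊔ Y).colon F ≤ J ⊔ Y) :
    P.colon F ⊔ Y = J ⊔ Y :=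
  le_antisymm (sup_le ((Submodule.colon_mono hPJ le_rfl).trans hsat) le_sup_right)
    (sup_le_sup_right (hJP.trans Ideal.le_colon) Y)

theorem Polynomial.mem_map_C_of_mul_X_pow_mem {R : Type*} [CommSemiring R] {I : Ideal R}
    {f : Polynomial R} {n : ℕ} (h : f * X ^ n ∈ I.map C) : f ∈ I.map C := by
  rw [Ideal.mem_map_C_iff] at h ⊢
  intro m
  simpa [coeff_mul_X_pow] using h (m + n)

namespace MvPolynomial

variable {R σ : Type*} [CommSemiring R] [DecidableEq σ]

variable (R) in
noncomputable def polynomialEquivOfNe (z : σ) :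
    MvPolynomial σ R ≃ₐ[R] Polynomial (MvPolynomial {v // v ≠ z} R) :=
  (renameEquiv R (Equiv.optionSubtypeNe z).symm).trans (optionEquivLeft R _)

theorem polynomialEquivOfNe_X_self (z : σ) :
    polynomialEquivOfNe R z (X z) = Polynomial.X := by
  simp [polynomialEquivOfNe, optionEquivLeft_X_none]

theorem polynomialEquivOfNe_comp_rename (z : σ) :
    (polynomialEquivOfNe R z).toAlgHom.comp (rename Subtype.val) = Polynomial.CAlgHom := by
  ext v
  simp [polynomialEquivOfNe, Equiv.optionSubtypeNe_symm_of_ne v.2, optionEquivLeft_X_some]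

theorem mem_map_rename_of_mul_X_pow_mem {z : σ} {B : Ideal (MvPolynomial {v // v ≠ z} R)}
    {f : MvPolynomial σ R} {n : ℕ} (h : f * X z ^ n ∈ B.map (rename Subtype.val)) :
    f ∈ B.map (rename Subtype.val) := by
  set e := polynomialEquivOfNe R z
  have hmap : (B.map (rename Subtype.val)).map e = B.map Polynomial.C := by
    have hcomp := Ideal.map_mapₐ (I := B) (rename Subtype.val) e.toAlgHom
    rwa [polynomialEquivOfNe_comp_rename] at hcomp
  have hf : e f ∈ (B.map (rename Subtype.val)).map e := by
    have hfX := Ideal.mem_map_of_mem e h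
    rw [hmap, map_mul, map_pow, polynomialEquivOfNe_X_self] at hfX
    exact hmap ▸ Polynomial.mem_map_C_of_mul_X_pow_mem hfX
  obtain ⟨g, hg, hgf⟩ := (Ideal.mem_map_of_equiv e _).1 hf
  rwa [← e.injective hgf]

end MvPolynomial

section edgeIdeal

variable {k : Type*} [Field k] {V : Type*} {E : Finset (V × V)} {w : V → ℕ}

theorem edgeIdeal_mono {E' : Finset (V × V)} (h : E' ⊆ E) :
    edgeIdeal k E' w ≤ edgeIdeal k E w :=
  Ideal.span_mono (Set.image_mono (Finset.coe_subset.2 h))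

theorem edgeIdeal_le_edgeIdeal_filter_sup [DecidableEq V] {y : V} (hy : 1 ≤ w y) :
    edgeIdeal k E w ≤
      edgeIdeal k (E.filter fun e => e.1 ≠ y ∧ e.2 ≠ y) w ⊔ Ideal.span {X y} := by
  rw [edgeIdeal, Ideal.span_le]
  rintro _ ⟨e, he, rfl⟩
  by_cases hey : e.1 ≠ y ∧ e.2 ≠ y
  · exact Ideal.mem_sup_left (Ideal.subset_span ⟨e, by simp_all, rfl⟩)
  · refine Ideal.mem_sup_right (Ideal.mem_span_singleton.2 ?_)
    rcases not_and_or.1 hey with h | h <;> rw [not_not] at h <;> subst h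
    · exact dvd_mul_right _ _
    · exact (dvd_pow_self _ (by omega)).mul_left _

theorem exists_edgeIdeal_eq_map_rename {z : V} (hE : ∀ e ∈ E, e.1 ≠ z ∧ e.2 ≠ z) :
    ∃ B : Ideal (MvPolynomial {v // v ≠ z} k),
      edgeIdeal k E w = B.map (rename Subtype.val) := by
  refine ⟨Ideal.span (rename Subtype.val ⁻¹'
    ((fun e : V × V => X e.1 * X e.2 ^ w e.2) '' (E : Set (V × V)))), ?_⟩
  rw [Ideal.map_span, Set.image_preimage_eq_of_subset, edgeIdeal]
  rintro _ ⟨e, he, rfl⟩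
  exact ⟨X ⟨e.1, (hE e he).1⟩ * X ⟨e.2, (hE e he).2⟩ ^ w e.2, by simp⟩

theorem pow_edgeIdeal_sup_span_X_colon_le [DecidableEq V] {y z : V}
    (hE : ∀ e ∈ E, e.1 ≠ z ∧ e.2 ≠ z) (hyz : y ≠ z) (t n : ℕ) :
    (edgeIdeal k E w ^ t ⊔ Ideal.span {X y}).colon (Ideal.span {(X z : MvPolynomial V k) ^ n}) ≤
      edgeIdeal k E w ^ t ⊔ Ideal.span {X y} := by
  obtain ⟨B, hB⟩ := exists_edgeIdeal_eq_map_rename (k := k) (w := w) hE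
  have hmap : edgeIdeal k E w ^ t ⊔ Ideal.span {X y} =
      (B ^ t ⊔ Ideal.span {X ⟨y, hyz⟩}).map (rename Subtype.val) := by
    rw [Ideal.map_sup, Ideal.map_pow, Ideal.map_span, ← hB, Set.image_singleton, rename_X]
  intro f hf
  rw [Ideal.mem_colon_span_singleton, hmap] at hf
  rw [hmap]
  exact mem_map_rename_of_mul_X_pow_mem hf

end edgeIdeal

theorem pow_edgeIdeal_colon_leafPow_sup_general
    (k : Type) [Field k] (V : Type) [DecidableEq V]
    (E : Finset (V × V)) (w : V → ℕ)
    (hw : ∀ v : V, 1 ≤ w v)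
    (hloop : ∀ e ∈ E, e.1 ≠ e.2)
    (y z : V) (hyz : (y, z) ∈ E)
    (hleaf : ∀ e ∈ E, (e.1 = z ∨ e.2 = z) → e = (y, z))
    (t : ℕ) :
    ((edgeIdeal k E w) ^ t).colon (Ideal.span {(X z : MvPolynomial V k) ^ w z})
        ⊔ Ideal.span {(X y : MvPolynomial V k)}
      = ((edgeIdeal k (E.filter (fun e => e.1 ≠ y ∧ e.2 ≠ y)) w) ^ t).colon
            (Ideal.span {(X z : MvPolynomial V k) ^ w z})
          ⊔ Ideal.span {(X y : MvPolynomial V k)}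
    ∧ ((edgeIdeal k (E.filter (fun e => e.1 ≠ y ∧ e.2 ≠ y)) w) ^ t).colon
            (Ideal.span {(X z : MvPolynomial V k) ^ w z})
          ⊔ Ideal.span {(X y : MvPolynomial V k)}
      = (edgeIdeal k (E.filter (fun e => e.1 ≠ y ∧ e.2 ≠ y)) w) ^ t
          ⊔ Ideal.span {(X y : MvPolynomial V k)} := by
  set J := edgeIdeal k (E.filter fun e => e.1 ≠ y ∧ e.2 ≠ y) w
  have hJ_avoid : ∀ e ∈ E.filter (fun e => e.1 ≠ y ∧ e.2 ≠ y), e.1 ≠ z ∧ e.2 ≠ z := by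
    intro e he
    rw [Finset.mem_filter] at he
    constructor <;> intro h <;> simp [hleaf e he.1 (by simp [h])] at he
  have hsat := pow_edgeIdeal_sup_span_X_colon_le (k := k) (w := w) (y := y)
    hJ_avoid (hloop _ hyz) t (w z)
  have hJI : J ^ t ≤ edgeIdeal k E w ^ t :=
    Ideal.pow_right_mono (edgeIdeal_mono (Finset.filter_subset _ E)) t
  have hIJ : edgeIdeal k E w ^ t ≤ J ^ t ⊔ Ideal.span {X y} :=
    (Ideal.pow_right_mono (edgeIdeal_le_edgeIdeal_filter_sup (hw y)) t).trans
      (Ideal.sup_pow_le_pow_sup _ _ t)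
  have hJ := Ideal.colon_sup_eq_of_le_of_le_sup le_rfl le_sup_left hsat
  exact ⟨(Ideal.colon_sup_eq_of_le_of_le_sup hJI hIJ hsat).trans hJ.symm, hJ⟩

/-- **Lemma.** Let `D` be a vertex-weighted oriented graph and `z` a leaf whose only
incident edge is `(y, z)`.  Then for all `t ≥ 2`,
`((I(D)^t : x_z^{w_z}), x_y) = ((I(D \ y)^t : x_z^{w_z}), x_y) = (I(D \ y)^t, x_y)`. -/
theorem pow_edgeIdeal_colon_leafPow_sup
    (k : Type) [Field k] (V : Type) [DecidableEq V]
    (E : Finset (V × V)) (w : V → ℕ)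
    (hw : ∀ v : V, 1 ≤ w v)
    (hloop : ∀ e ∈ E, e.1 ≠ e.2)
    (y z : V) (hyz : (y, z) ∈ E)
    (hleaf : ∀ e ∈ E, (e.1 = z ∨ e.2 = z) → e = (y, z))
    (t : ℕ) (ht : 2 ≤ t) :
    ((edgeIdeal k E w) ^ t).colon (Ideal.span {(X z : MvPolynomial V k) ^ w z})
        ⊔ Ideal.span {(X y : MvPolynomial V k)}
      = ((edgeIdeal k (E.filter (fun e => e.1 ≠ y ∧ e.2 ≠ y)) w) ^ t).colon
            (Ideal.span {(X z : MvPolynomial V k) ^ w z})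
          ⊔ Ideal.span {(X y : MvPolynomial V k)}
    ∧ ((edgeIdeal k (E.filter (fun e => e.1 ≠ y ∧ e.2 ≠ y)) w) ^ t).colon
            (Ideal.span {(X z : MvPolynomial V k) ^ w z})
          ⊔ Ideal.span {(X y : MvPolynomial V k)}
      = (edgeIdeal k (E.filter (fun e => e.1 ≠ y ∧ e.2 ≠ y)) w) ^ t
          ⊔ Ideal.span {(X y : MvPolynomial V k)} :=
  pow_edgeIdeal_colon_leafPow_sup_general k V E w hw hloop y z hyz hleaf t
end

section
/- Let S = k[x_1, …, x_n] be a polynomial ring over a field k, let u_1, …, u_r (r ≥ 2) be a regular sequence of homogeneous polynomials in S, and set I = (u_1, …, u_r) and J = (u_1, …, u_{r−1}). Then for every integer t ≥ 1, one has I^t = J^t + u_r·I^{t−1} and (u_r·I^{t−1}) ∩ J^t = u_r·J^t. -/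
/-!
The first identity holds for any two ideals: `(J + (f))^t = J^t + f (J + (f))^(t-1)`. For the
second it suffices that `f = u_r` is a nonzerodivisor on every `S / J^t`. This rests on the
quasi-regularity of `u_1, …, u_(r-1)` (Matsumura, *Commutative Ring Theory*, Thm. 16.2): a form
`F` of degree `s` with `F(u) ∈ J^(s+1)` has all its coefficients in `J`. Every element of `J^s`
is `F(u)` for a form of degree `s`; if `f F(u) ∈ J^(s+1)`, quasi-regularity puts the
coefficients of `f F`, hence those of `F`, in `J`, so `F(u) ∈ J^(s+1)`. Climbing from `s = 0`
to `t` shows that `f g ∈ J^t` forces `g ∈ J^t`. Quasi-regularity itself is proved by induction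
on the length of the sequence and on the degree, writing a form as `G(x') + x_0 H(x)` with `G`
free of `x_0`.
-/

open MvPolynomial

namespace MvPolynomial

variable {R σ : Type*} [CommRing R]

theorem map_aeval_homogeneousSubmodule (v : σ → R) (t : ℕ) :
    (homogeneousSubmodule σ R t).map (aeval v).toLinearMap = Ideal.span (Set.range v) ^ t := by
  rw [← homogeneousSubmodule_one_pow, Submodule.map_pow, homogeneousSubmodule_one_eq_span_X,
    Submodule.map_span, ← Set.range_comp]
  congr 2
  ext i
  simp

theorem IsHomogeneous.eval_mem_pow (v : σ → R) {F : MvPolynomial σ R} {t : ℕ}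
    (hF : F.IsHomogeneous t) : eval v F ∈ Ideal.span (Set.range v) ^ t := by
  rw [← map_aeval_homogeneousSubmodule, ← coe_aeval_eq_eval]
  exact Submodule.mem_map_of_mem hF

theorem exists_isHomogeneous_eval_eq {v : σ → R} {t : ℕ} {x : R}
    (hx : x ∈ Ideal.span (Set.range v) ^ t) :
    ∃ F : MvPolynomial σ R, F.IsHomogeneous t ∧ eval v F = x := by
  rw [← map_aeval_homogeneousSubmodule] at hx
  obtain ⟨F, hF, rfl⟩ := hx
  exact ⟨F, hF, by simp⟩

theorem IsHomogeneous.eval_mem_mul_pow (v : σ → R) {K : Ideal R} {F : MvPolynomial σ R}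
    {t : ℕ} (hF : F.IsHomogeneous t) (hK : F ∈ K.map C) :
    eval v F ∈ K * Ideal.span (Set.range v) ^ t := by
  rw [F.as_sum, map_sum]
  refine Ideal.sum_mem _ fun e he => ?_
  rw [← mul_one (coeff e F), ← C_mul_monomial, map_mul, eval_C]
  refine Ideal.mul_mem_mul (mem_map_C_iff.mp hK e) ((isHomogeneous_monomial _ ?_).eval_mem_pow v)
  rw [Finsupp.degree_eq_weight_one]
  exact hF (mem_support_iff.mp he)

theorem IsHomogeneous.of_X_mul {H : MvPolynomial σ R} {i : σ} {t : ℕ}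
    (h : (X i * H).IsHomogeneous (t + 1)) : H.IsHomogeneous t := by
  intro e he
  have := h (by rwa [coeff_X_mul])
  simp only [map_add, Finsupp.weight_single, Pi.one_apply, smul_eq_mul, mul_one] at this
  omega

theorem rename_mem_map_C {τ : Type*} (f : σ → τ) {K : Ideal R} {G : MvPolynomial σ R}
    (hG : G ∈ K.map C) : rename f G ∈ K.map (C : R →+* MvPolynomial τ R) := by
  have h := Ideal.mem_map_of_mem (rename f).toRingHom hG
  rwa [Ideal.map_map, show (rename f).toRingHom.comp C = C from RingHom.ext (rename_C f)] at h

theorem finSuccEquiv_rename_succ {m : ℕ} (G : MvPolynomial (Fin m) R) :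
    finSuccEquiv R m (rename Fin.succ G) = Polynomial.C G := by
  have h : (finSuccEquiv R m).toAlgHom.comp (rename Fin.succ) = Polynomial.CAlgHom :=
    algHom_ext fun i => by simp [finSuccEquiv_X_succ]
  exact DFunLike.congr_fun h G

theorem IsHomogeneous.exists_eq_rename_succ_add_X_zero_mul {m t : ℕ}
    {F : MvPolynomial (Fin (m + 1)) R} (hF : F.IsHomogeneous (t + 1)) :
    ∃ (G : MvPolynomial (Fin m) R) (H : MvPolynomial (Fin (m + 1)) R),
      G.IsHomogeneous (t + 1) ∧ H.IsHomogeneous t ∧ F = rename Fin.succ G + X 0 * H := by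
  set P := finSuccEquiv R m F
  have hG : (P.coeff 0).IsHomogeneous (t + 1) :=
    hF.finSuccEquiv_coeff_isHomogeneous 0 _ (zero_add _)
  have hsplit : F = rename Fin.succ (P.coeff 0) + X 0 * (finSuccEquiv R m).symm P.divX := by
    apply (finSuccEquiv R m).injective
    rw [map_add, map_mul, finSuccEquiv_X_zero, AlgEquiv.apply_symm_apply, finSuccEquiv_rename_succ]
    exact (add_comm _ _ |>.trans P.X_mul_divX_add).symm
  refine ⟨_, _, hG, IsHomogeneous.of_X_mul (i := 0) ?_, hsplit⟩
  rw [eq_sub_of_add_eq' hsplit.symm]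
  exact hF.sub (rename_isHomogeneous hG)

end MvPolynomial

namespace Ideal

variable {R : Type*} [CommRing R]

theorem sup_pow_succ (K L : Ideal R) (t : ℕ) :
    (K ⊔ L) ^ (t + 1) = K ^ (t + 1) ⊔ L * (K ⊔ L) ^ t := by
  refine le_antisymm ?_ (sup_le (pow_right_mono le_sup_left _) ?_)
  · induction t with
    | zero => simp
    | succ t ih =>
      calc (K ⊔ L) ^ (t + 2) = (K ⊔ L) ^ (t + 1) * (K ⊔ L) := pow_succ _ _
        _ ≤ (K ^ (t + 1) ⊔ L * (K ⊔ L) ^ t) * (K ⊔ L) := mul_mono_left ih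
        _ = K ^ (t + 2) ⊔ (K ^ (t + 1) * L ⊔ L * (K ⊔ L) ^ (t + 1)) := by
          rw [sup_mul, mul_sup, mul_assoc, ← pow_succ, ← pow_succ, sup_assoc]
        _ ≤ K ^ (t + 2) ⊔ L * (K ⊔ L) ^ (t + 1) := by
          refine sup_le_sup_left (sup_le ?_ le_rfl) _
          rw [mul_comm]
          exact mul_mono_right (pow_right_mono le_sup_left _)
  · rw [pow_succ']
    exact mul_mono_left le_sup_right

theorem mem_sup_span_singleton_pow_succ {K : Ideal R} {y z : R} {t : ℕ} :
    z ∈ (K ⊔ span {y}) ^ (t + 1) ↔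
      ∃ a ∈ K ^ (t + 1), ∃ b ∈ (K ⊔ span {y}) ^ t, a + y * b = z := by
  simp only [sup_pow_succ, Submodule.mem_sup, mem_span_singleton_mul]
  constructor
  · rintro ⟨a, ha, _, ⟨b, hb, rfl⟩, rfl⟩
    exact ⟨a, ha, b, hb, rfl⟩
  · rintro ⟨a, ha, b, hb, rfl⟩
    exact ⟨a, ha, _, ⟨b, hb, rfl⟩, rfl⟩

section

variable {K : Ideal R} {y a : R} {s : ℕ}

theorem mem_sup_span_singleton_pow_of_add_mul_mem {b : R}
    (hy : ∀ g, y * g ∈ K ^ s → g ∈ K ^ s) (ha : a ∈ K ^ s)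
    (hab : a + y * b ∈ (K ⊔ span {y}) ^ (s + 1)) : b ∈ (K ⊔ span {y}) ^ s := by
  obtain ⟨a', ha', b', hb', h⟩ := mem_sup_span_singleton_pow_succ.mp hab
  have hdiff : b' - b ∈ K ^ s := hy _ <| by
    rw [show y * (b' - b) = a - a' by linear_combination h]
    exact sub_mem ha (pow_le_pow_right s.le_succ ha')
  rw [show b = b' - (b' - b) by ring]
  exact sub_mem hb' (pow_right_mono le_sup_left _ hdiff)

theorem exists_sub_mul_mem_pow_succ
    (hy : ∀ g, y * g ∈ K ^ s → g ∈ K ^ s) (ha : a ∈ K ^ s)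
    (ha_succ : a ∈ (K ⊔ span {y}) ^ (s + 1)) : ∃ c ∈ K ^ s, a - y * c ∈ K ^ (s + 1) := by
  obtain ⟨a', ha', c, -, rfl⟩ := mem_sup_span_singleton_pow_succ.mp ha_succ
  refine ⟨c, hy c ?_, by simpa using ha'⟩
  simpa using sub_mem ha (pow_le_pow_right s.le_succ ha')

end

theorem span_singleton_mul_inf_eq {f : R} {K L : Ideal R} (hKL : K ≤ L)
    (hf : ∀ g, f * g ∈ K → g ∈ K) : span {f} * L ⊓ K = span {f} * K := by
  refine le_antisymm (fun x hx => ?_) (le_inf (mul_mono_right hKL) mul_le_right)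
  obtain ⟨⟨g, -, rfl⟩, hgK⟩ := And.imp_left mem_span_singleton_mul.mp (mem_inf.mp hx)
  exact mul_mem_mul (mem_span_singleton_self f) (hf g hgK)

theorem span_range_cons {m : ℕ} (y : R) (w : Fin m → R) :
    span (Set.range (Fin.cons y w : Fin (m + 1) → R)) = span (Set.range w) ⊔ span {y} := by
  rw [Fin.range_cons, span_insert, sup_comm]

open RingTheory.Sequence

theorem mem_ofList_of_mul_mem_of_isWeaklyRegular_append {l : List R} {f c : R}
    (h : IsWeaklyRegular R (l ++ [f])) (hc : f * c ∈ ofList l) : c ∈ ofList l := by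
  have hf := ((isWeaklyRegular_append_iff R l [f]).mp h).2
  rw [isWeaklyRegular_singleton_iff, isSMulRegular_quotient_iff_mem_of_smul_mem] at hf
  simpa [smul_eq_mul, mul_top] using hf c (by simpa [mul_top] using hc)

theorem ofList_ofFn {m : ℕ} (v : Fin m → R) : ofList (List.ofFn v) = span (Set.range v) := by
  simp [ofList, List.mem_ofFn, Set.range]

theorem ofList_reverse (l : List R) : ofList l.reverse = ofList l := by
  simp [ofList]

end Ideal

section QuasiRegular

open Ideal RingTheory.Sequence

variable {R σ : Type*} [CommRing R]

/-- Quasi-regularity of `v` in degree `t`, in the sense of Matsumura, §16. -/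
def IsQuasiRegularAt (v : σ → R) (t : ℕ) : Prop :=
  ∀ F : MvPolynomial σ R, F.IsHomogeneous t →
    eval v F ∈ span (Set.range v) ^ (t + 1) → F ∈ (span (Set.range v)).map C

theorem isQuasiRegularAt_zero (v : σ → R) : IsQuasiRegularAt v 0 := by
  intro F hF hFv
  rw [← totalDegree_zero_iff_isHomogeneous, totalDegree_eq_zero_iff_eq_C] at hF
  rw [hF, eval_C, zero_add, pow_one] at hFv
  rw [hF]
  exact mem_map_of_mem C hFv

theorem isQuasiRegularAt_of_isEmpty [IsEmpty σ] (v : σ → R) (t : ℕ) :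
    IsQuasiRegularAt v t := by
  intro F _ hFv
  rw [Set.range_eq_empty, span_empty, bot_pow t.succ_ne_zero, mem_bot] at hFv
  rw [eq_C_of_isEmpty F, ← eval_C (f := v) (coeff 0 F), ← eq_C_of_isEmpty F, hFv, map_zero]
  exact zero_mem _

theorem mem_pow_of_mul_mem_pow {v : σ → R} (hv : ∀ t, IsQuasiRegularAt v t) {f : R}
    (hf : ∀ c, f * c ∈ span (Set.range v) → c ∈ span (Set.range v)) {g : R} {t : ℕ}
    (hg : f * g ∈ span (Set.range v) ^ t) : g ∈ span (Set.range v) ^ t := by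
  suffices ∀ s ≤ t, g ∈ span (Set.range v) ^ s from this t le_rfl
  intro s
  induction s with
  | zero => simp
  | succ s ih =>
    intro hs
    obtain ⟨F, hF, rfl⟩ := exists_isHomogeneous_eval_eq (ih (by omega))
    have hfF : C f * F ∈ (span (Set.range v)).map C :=
      hv s _ (hF.C_mul f) (by simpa using pow_le_pow_right hs hg)
    have hF' : F ∈ (span (Set.range v)).map C := mem_map_C_iff.mpr fun e =>
      hf _ (by simpa [coeff_C_mul] using mem_map_C_iff.mp hfF e)
    simpa [← pow_succ'] using hF.eval_mem_mul_pow v hF'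

theorem mem_map_C_sup_of_eval_mem_sup_pow {w : σ → R} (hw : ∀ t, IsQuasiRegularAt w t) {y : R}
    (hy : ∀ c, y * c ∈ span (Set.range w) → c ∈ span (Set.range w))
    {G : MvPolynomial σ R} {s : ℕ} (hG : G.IsHomogeneous s)
    (hGw : eval w G ∈ (span (Set.range w) ⊔ span {y}) ^ (s + 1)) :
    G ∈ (span (Set.range w) ⊔ span {y}).map C := by
  obtain ⟨c, hc, hac⟩ := exists_sub_mul_mem_pow_succ
    (fun _ => mem_pow_of_mul_mem_pow hw hy) (hG.eval_mem_pow w) hGw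
  obtain ⟨D, hD, rfl⟩ := exists_isHomogeneous_eval_eq hc
  have hGD : G - C y * D ∈ (span (Set.range w)).map C :=
    hw s _ (hG.sub (hD.C_mul y)) (by simpa using hac)
  have hyD : C y * D ∈ (span (Set.range w) ⊔ span {y}).map C :=
    mul_mem_right _ _ (mem_map_of_mem _ (mem_sup_right (mem_span_singleton_self y)))
  simpa using add_mem (map_mono le_sup_left hGD) hyD

theorem isQuasiRegularAt_cons_succ {m : ℕ} {w : Fin m → R} (hw : ∀ t, IsQuasiRegularAt w t)
    {y : R} (hy : ∀ c, y * c ∈ span (Set.range w) → c ∈ span (Set.range w)) {t : ℕ}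
    (ht : IsQuasiRegularAt (Fin.cons y w : Fin (m + 1) → R) t) :
    IsQuasiRegularAt (Fin.cons y w : Fin (m + 1) → R) (t + 1) := by
  intro F hF hFv
  obtain ⟨G, H, hG, hH, rfl⟩ := hF.exists_eq_rename_succ_add_X_zero_mul
  rw [span_range_cons] at hFv ⊢
  set J := span (Set.range w) ⊔ span {y}
  rw [map_add, map_mul, eval_rename, eval_X, Fin.cons_zero, Fin.cons_comp_succ] at hFv
  have hHv : eval (Fin.cons y w) H ∈ J ^ (t + 1) := mem_sup_span_singleton_pow_of_add_mul_mem
    (fun _ => mem_pow_of_mul_mem_pow hw hy) (hG.eval_mem_pow w) hFv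
  have hHC : H ∈ J.map C := by
    have hHt := ht H hH
    rw [span_range_cons] at hHt
    exact hHt hHv
  have hGv : eval w G ∈ J ^ (t + 2) := by
    have hHv' := hH.eval_mem_mul_pow (Fin.cons y w) hHC
    rw [span_range_cons, ← pow_succ'] at hHv'
    have hyH : y * eval (Fin.cons y w) H ∈ J ^ (t + 2) := by
      rw [pow_succ' J (t + 1)]
      exact mul_mem_mul (mem_sup_right (mem_span_singleton_self y)) hHv'
    simpa using sub_mem hFv hyH
  exact add_mem (rename_mem_map_C _ (mem_map_C_sup_of_eval_mem_sup_pow hw hy hG hGv))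
    (mul_mem_left _ _ hHC)

-- `v 0` is the last element of the sequence: it is the variable that `finSuccEquiv` splits off.
theorem isQuasiRegularAt_of_isWeaklyRegular_reverse {m : ℕ} (v : Fin m → R)
    (hv : IsWeaklyRegular R (List.ofFn v).reverse) (t : ℕ) : IsQuasiRegularAt v t := by
  induction v using Fin.consInduction generalizing t with
  | elim0 => exact isQuasiRegularAt_of_isEmpty _ t
  | cons y w ih =>
    rw [List.ofFn_succ, List.reverse_cons] at hv
    simp only [Fin.cons_zero, Fin.cons_succ] at hv
    have hw : ∀ t, IsQuasiRegularAt w t :=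
      ih ((isWeaklyRegular_append_iff R _ _).mp hv).1
    have hy : ∀ c, y * c ∈ span (Set.range w) → c ∈ span (Set.range w) := by
      simpa only [ofList_reverse, ofList_ofFn] using
        fun c => mem_ofList_of_mul_mem_of_isWeaklyRegular_append (c := c) hv
    induction t with
    | zero => exact isQuasiRegularAt_zero _
    | succ t ht => exact isQuasiRegularAt_cons_succ hw hy ht

theorem Ideal.mem_ofList_pow_of_mul_mem_of_isWeaklyRegular_append {l : List R} {f : R}
    (h : IsWeaklyRegular R (l ++ [f])) {g : R} {t : ℕ} (hg : f * g ∈ ofList l ^ t) :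
    g ∈ ofList l ^ t := by
  obtain ⟨m, v, rfl⟩ : ∃ (m : ℕ) (v : Fin m → R), (List.ofFn v).reverse = l :=
    ⟨l.reverse.length, fun i => l.reverse[(i : ℕ)], by
      rw [List.ofFn_getElem, List.reverse_reverse]⟩
  rw [ofList_reverse, ofList_ofFn] at hg ⊢
  have hf : ∀ c, f * c ∈ span (Set.range v) → c ∈ span (Set.range v) := by
    simpa only [ofList_reverse, ofList_ofFn] using
      fun c => mem_ofList_of_mul_mem_of_isWeaklyRegular_append (c := c) h
  exact mem_pow_of_mul_mem_pow
    (isQuasiRegularAt_of_isWeaklyRegular_reverse v ((isWeaklyRegular_append_iff R _ _).mp h).1)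
    hf hg

end QuasiRegular

/-- **Lemma.** Let `u_1, …, u_r` (`r ≥ 2`) be a regular sequence of homogeneous
polynomials in `S = k[x_1, …, x_n]`, `I = (u_1, …, u_r)` and `J = (u_1, …, u_{r-1})`.
Then for all `t ≥ 1` one has `I^t = J^t + u_r I^{t-1}` and
`(u_r I^{t-1}) ∩ J^t = u_r J^t`. -/
theorem pow_regularSequence_ideal_decomposition
    (k : Type) [Field k] (n r : ℕ) (hr : 2 ≤ r)
    (u : Fin r → MvPolynomial (Fin n) k)
    (hreg : RingTheory.Sequence.IsRegular (MvPolynomial (Fin n) k) (List.ofFn u))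
    (I J : Ideal (MvPolynomial (Fin n) k))
    (hI : I = Ideal.span (Set.range u))
    (hJ : J = Ideal.span (u '' {i : Fin r | (i : ℕ) < r - 1}))
    (t : ℕ) (ht : 1 ≤ t) :
    I ^ t = J ^ t ⊔ Ideal.span {u ⟨r - 1, by omega⟩} * I ^ (t - 1)
    ∧ (Ideal.span {u ⟨r - 1, by omega⟩} * I ^ (t - 1)) ⊓ J ^ t
        = Ideal.span {u ⟨r - 1, by omega⟩} * J ^ t := by
  obtain ⟨s, rfl⟩ : ∃ s, r = s + 2 := ⟨r - 2, by omega⟩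
  obtain ⟨t, rfl⟩ : ∃ t', t = t' + 1 := ⟨t - 1, by omega⟩
  set l := List.ofFn fun i : Fin (s + 1) => u i.castSucc
  have hsplit : List.ofFn u = l ++ [u (Fin.last _)] := by
    rw [List.ofFn_succ', List.concat_eq_append]
  have hJl : J = Ideal.ofList l := by
    rw [hJ, Ideal.ofList_ofFn, ← Function.comp_def, Set.range_comp, Fin.range_castSucc]
    rfl
  have hIl : I = J ⊔ Ideal.span {u (Fin.last _)} := by
    rw [hI, hJl, ← Ideal.ofList_ofFn, hsplit, Ideal.ofList_append, Ideal.ofList_singleton]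
  rw [hsplit] at hreg
  simp only [Nat.add_sub_cancel]
  refine ⟨by rw [hIl, Ideal.sup_pow_succ]; rfl, ?_⟩
  refine Ideal.span_singleton_mul_inf_eq
    ((Ideal.pow_right_mono (hIl ▸ le_sup_left) _).trans (Ideal.pow_le_pow_right t.le_succ))
    fun g => hJl ▸ Ideal.mem_ofList_pow_of_mul_mem_of_isWeaklyRegular_append
      hreg.toIsWeaklyRegular
end

section
/- Let D = (V, E, w) be a vertex-weighted oriented graph having a connected component consisting of the single edge (y,z) (so the only edge incident to y or z is (y,z)). Then for every integer t ≥ 2, one has I(D)^t = I(D∖z)^t + x_y·x_z^{w(z)}·I(D)^{t−1} and (x_y·x_z^{w(z)}·I(D)^{t−1}) ∩ I(D∖z)^t = x_y·x_z^{w(z)}·I(D∖z)^t. -/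
open MvPolynomial

theorem Ideal.sup_pow_succ_s6 {R : Type*} [CommSemiring R] (A B : Ideal R) (n : ℕ) :
    (A ⊔ B) ^ (n + 1) = A ^ (n + 1) ⊔ B * (A ⊔ B) ^ n := by
  induction n with
  | zero => simp
  | succ n ih =>
    refine le_antisymm ?_ (sup_le (Ideal.pow_right_mono le_sup_left _) ?_)
    · calc (A ⊔ B) ^ (n + 1 + 1) = A * (A ⊔ B) ^ (n + 1) ⊔ B * (A ⊔ B) ^ (n + 1) := by
            rw [pow_succ', Ideal.sup_mul]
        _ = A ^ (n + 1 + 1) ⊔ A * B * (A ⊔ B) ^ n ⊔ B * (A ⊔ B) ^ (n + 1) := by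
            rw [ih, Ideal.mul_sup, ← pow_succ', mul_assoc]
        _ ≤ A ^ (n + 1 + 1) ⊔ B * (A ⊔ B) ^ (n + 1) := by
            refine sup_le (sup_le_sup_left ?_ _) le_sup_right
            rw [mul_comm A, mul_assoc, pow_succ' (A ⊔ B)]
            exact Ideal.mul_mono_right (Ideal.mul_mono_left le_sup_left)
    · exact (Ideal.mul_mono_left le_sup_right).trans_eq (pow_succ' (A ⊔ B) (n + 1)).symm

theorem Ideal.span_singleton_mul_inf_eq_of_mul_mem {R : Type*} [CommSemiring R] {f : R}
    {I J : Ideal R} (hJI : J ≤ I) (hf : ∀ p, f * p ∈ J → p ∈ J) :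
    Ideal.span {f} * I ⊓ J = Ideal.span {f} * J := by
  refine le_antisymm (fun x ⟨hxI, hxJ⟩ => ?_)
    (le_inf (Ideal.mul_mono_right hJI) Ideal.mul_le_right)
  obtain ⟨p, -, rfl⟩ := Ideal.mem_span_singleton_mul.mp hxI
  exact Ideal.mul_mem_mul (Ideal.mem_span_singleton_self f) (hf p hxJ)

namespace MvPolynomial

variable {R V : Type*} [CommRing R] [DecidableEq V]

/-- Moves the variables outside `s` into the coefficient ring. -/
noncomputable def separateVars (s : Finset V) :
    MvPolynomial V R →+* MvPolynomial V (MvPolynomial V R) :=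
  eval₂Hom (C.comp C) fun v => if v ∈ s then X v else C (X v)

theorem eval_X_comp_separateVars (s : Finset V) :
    (eval X).comp (separateVars (R := R) s) = RingHom.id _ := by
  refine ringHom_ext (fun a => by simp [separateVars]) fun v => ?_
  by_cases hv : v ∈ s; all_goals simp [separateVars, hv]

theorem separateVars_eq_C {s : Finset V} {p : MvPolynomial V R} (hp : ∀ v ∈ p.vars, v ∉ s) :
    separateVars s p = C p :=
  hom_congr_vars (by ext; simp [separateVars])
    (fun v hv _ => by simp [separateVars, hp v hv]) rfl

theorem separateVars_monomial {s : Finset V} {d : V →₀ ℕ} (hd : d.support ⊆ s) (a : R) :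
    separateVars s (monomial d a) = monomial d (C a) := by
  rw [separateVars, eval₂Hom_monomial, monomial_eq, RingHom.comp_apply]
  congr 1
  exact Finsupp.prod_congr fun v hv => by rw [if_pos (hd hv)]

theorem map_separateVars_span {s : Finset V} {G : Set (MvPolynomial V R)}
    (hG : ∀ g ∈ G, ∀ v ∈ g.vars, v ∉ s) :
    (Ideal.span G).map (separateVars s) = (Ideal.span G).map C := by
  rw [Ideal.map_span, Ideal.map_span]
  congr 1
  exact Set.image_congr fun g hg => separateVars_eq_C (hG g hg)

/-- `hI` says that `I` is extended from the polynomial ring in the variables outside `s`. -/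
theorem mem_of_monomial_mul_mem {s : Finset V} {I : Ideal (MvPolynomial V R)}
    (hI : I.map (separateVars s) ≤ I.map C) {d : V →₀ ℕ} (hd : d.support ⊆ s)
    {p : MvPolynomial V R} (hp : monomial d 1 * p ∈ I) : p ∈ I := by
  have hsep : separateVars s p ∈ I.map C := by
    have hmul := hI (Ideal.mem_map_of_mem _ hp)
    rw [map_mul, separateVars_monomial hd] at hmul
    rw [mem_map_C_iff] at hmul ⊢
    intro n
    simpa [coeff_monomial_mul] using hmul (d + n)
  have hC : (eval X).comp (C : MvPolynomial V R →+* _) = RingHom.id _ := by ext <;> simp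
  have := Ideal.mem_map_of_mem (eval X) hsep
  rwa [Ideal.map_map, hC, Ideal.map_id, ← RingHom.comp_apply, eval_X_comp_separateVars,
    RingHom.id_apply] at this

end MvPolynomial

section EdgeIdeal

variable {k V : Type*} [Field k] (E : Finset (V × V)) (w : V → ℕ)

theorem edgeIdeal_insert [DecidableEq V] (e : V × V) :
    edgeIdeal k (insert e E) w = edgeIdeal k E w ⊔ Ideal.span {X e.1 * X e.2 ^ w e.2} := by
  rw [edgeIdeal, edgeIdeal, Finset.coe_insert, Set.image_insert_eq, Ideal.span_insert, sup_comm]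

theorem map_separateVars_edgeIdeal [DecidableEq V] {s : Finset V}
    (hE : ∀ e ∈ E, e.1 ∉ s ∧ e.2 ∉ s) :
    (edgeIdeal k E w).map (separateVars s) = (edgeIdeal k E w).map C := by
  refine map_separateVars_span ?_
  rintro _ ⟨e, he, rfl⟩ v hv
  have hv' : v ∈ ({e.1} ∪ {e.2} : Finset V) :=
    (vars_mul _ _).trans (Finset.union_subset_union vars_X.le ((vars_pow _ _).trans vars_X.le)) hv
  rcases Finset.mem_union.mp hv' with h | h <;> rw [Finset.mem_singleton.mp h]
  exacts [(hE e he).1, (hE e he).2]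

end EdgeIdeal

section IsolatedEdge

variable {V : Type*} [DecidableEq V] {E : Finset (V × V)} {y z : V}

theorem notMem_of_mem_filter_of_isolatedEdge
    (hcomp : ∀ e ∈ E, (e.1 = y ∨ e.2 = y ∨ e.1 = z ∨ e.2 = z) → e = (y, z)) :
    ∀ e ∈ E.filter (fun e => e.1 ≠ z ∧ e.2 ≠ z),
      e.1 ∉ ({y, z} : Finset V) ∧ e.2 ∉ ({y, z} : Finset V) := by
  intro e he
  obtain ⟨heE, -, h2⟩ := Finset.mem_filter.mp he
  have := mt (hcomp e heE) fun h => h2 (by rw [h])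
  simp only [Finset.mem_insert, Finset.mem_singleton]
  tauto

theorem insert_filter_of_isolatedEdge
    (hcomp : ∀ e ∈ E, (e.1 = y ∨ e.2 = y ∨ e.1 = z ∨ e.2 = z) → e = (y, z))
    (hyz : (y, z) ∈ E) :
    insert (y, z) (E.filter (fun e => e.1 ≠ z ∧ e.2 ≠ z)) = E := by
  ext e
  by_cases he : e = (y, z)
  · simp [he, hyz]
  · simp only [Finset.mem_insert, he, false_or, Finset.mem_filter, and_iff_left_iff_imp]
    grind

end IsolatedEdge

theorem pow_edgeIdeal_isolatedEdge_decomposition_general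
    (k : Type) [Field k] (V : Type) [DecidableEq V]
    (E : Finset (V × V)) (w : V → ℕ)
    (y z : V) (hyz : (y, z) ∈ E)
    (hcomp : ∀ e ∈ E, (e.1 = y ∨ e.2 = y ∨ e.1 = z ∨ e.2 = z) → e = (y, z))
    (t : ℕ) (ht : 2 ≤ t) :
    (edgeIdeal k E w) ^ t
        = (edgeIdeal k (E.filter (fun e => e.1 ≠ z ∧ e.2 ≠ z)) w) ^ t
            ⊔ Ideal.span {X y * (X z : MvPolynomial V k) ^ w z} * (edgeIdeal k E w) ^ (t - 1)
    ∧ (Ideal.span {X y * (X z : MvPolynomial V k) ^ w z} * (edgeIdeal k E w) ^ (t - 1))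
          ⊓ (edgeIdeal k (E.filter (fun e => e.1 ≠ z ∧ e.2 ≠ z)) w) ^ t
        = Ideal.span {X y * (X z : MvPolynomial V k) ^ w z}
            * (edgeIdeal k (E.filter (fun e => e.1 ≠ z ∧ e.2 ≠ z)) w) ^ t := by
  set E' := E.filter (fun e => e.1 ≠ z ∧ e.2 ≠ z)
  have hI : edgeIdeal k E w = edgeIdeal k E' w ⊔ Ideal.span {X y * X z ^ w z} := by
    rw [← edgeIdeal_insert E' w (y, z), insert_filter_of_isolatedEdge hcomp hyz]
  obtain ⟨n, rfl⟩ : ∃ n, t = n + 1 := ⟨t - 1, by omega⟩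
  refine ⟨by rw [hI, Ideal.sup_pow_succ_s6, Nat.add_sub_cancel], ?_⟩
  refine Ideal.span_singleton_mul_inf_eq_of_mul_mem ?_ fun p hp => ?_
  · exact (Ideal.pow_le_pow_right n.le_succ).trans (Ideal.pow_right_mono (hI ▸ le_sup_left) n)
  · rw [X_pow_eq_monomial, X, monomial_mul, one_mul] at hp
    refine mem_of_monomial_mul_mem (s := {y, z}) ?_ ?_ hp
    · rw [Ideal.map_pow, Ideal.map_pow,
        map_separateVars_edgeIdeal E' w (notMem_of_mem_filter_of_isolatedEdge hcomp)]
    · rw [Finset.insert_eq]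
      exact Finsupp.support_add.trans
        (Finset.union_subset_union Finsupp.support_single_subset Finsupp.support_single_subset)

/-- **Lemma.** Let `D` be a vertex-weighted oriented graph having a connected component
consisting of the single edge `(y, z)`.  Then for all `t ≥ 2`,
`I(D)^t = I(D \ z)^t + x_y x_z^{w_z} I(D)^{t-1}` and
`(x_y x_z^{w_z} I(D)^{t-1}) ∩ I(D \ z)^t = x_y x_z^{w_z} I(D \ z)^t`. -/
theorem pow_edgeIdeal_isolatedEdge_decomposition
    (k : Type) [Field k] (V : Type) [DecidableEq V]
    (E : Finset (V × V)) (w : V → ℕ)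
    (hw : ∀ v : V, 1 ≤ w v)
    (hloop : ∀ e ∈ E, e.1 ≠ e.2)
    (y z : V) (hyz : (y, z) ∈ E)
    (hcomp : ∀ e ∈ E, (e.1 = y ∨ e.2 = y ∨ e.1 = z ∨ e.2 = z) → e = (y, z))
    (t : ℕ) (ht : 2 ≤ t) :
    (edgeIdeal k E w) ^ t
        = (edgeIdeal k (E.filter (fun e => e.1 ≠ z ∧ e.2 ≠ z)) w) ^ t
            ⊔ Ideal.span {X y * (X z : MvPolynomial V k) ^ w z} * (edgeIdeal k E w) ^ (t - 1)
    ∧ (Ideal.span {X y * (X z : MvPolynomial V k) ^ w z} * (edgeIdeal k E w) ^ (t - 1))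
          ⊓ (edgeIdeal k (E.filter (fun e => e.1 ≠ z ∧ e.2 ≠ z)) w) ^ t
        = Ideal.span {X y * (X z : MvPolynomial V k) ^ w z}
            * (edgeIdeal k (E.filter (fun e => e.1 ≠ z ∧ e.2 ≠ z)) w) ^ t :=
  pow_edgeIdeal_isolatedEdge_decomposition_general k V E w y z hyz hcomp t ht
end

section
/- Let n ≥ 4, let S = k[x_1, …, x_n], and for 1 ≤ i ≤ n−1 set e_i = x_i x_{i+1}^{w_{i+1}}, where w_i ≥ 2 for 2 ≤ i ≤ n−1 and w_n ≥ 1. Let I(P_n) = (e_1, …, e_{n−1}) be the edge ideal of the oriented line graph P_n, and let I_n = (e_i e_j : 1 ≤ i < j ≤ n−1) be the ideal generated by all products of two distinct generators of I(P_n) (i.e. the minimal generators of I(P_n)^2 other than the squares e_i^2 = x_i^2 x_{i+1}^{2w_{i+1}}). Then: (1) (I_n, x_n^{w_n}) = (I_{n−1}, x_n^{w_n}); (2) ((I_n : x_n^{w_n}), x_{n−1}) = (I_{n−2}, x_{n−1}); (3) (I_n : x_{n−1} x_n^{w_n}) = I(P_{n−1}), where I_{n−1} and I_{n−2}, and I(P_{n−1}),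 are the analogous ideals in the variables x_1, …, x_{n−1} and x_1, …, x_{n−2} respectively. -/
open MvPolynomial

/-- `lineEdgeIdeal k n w m` is the edge ideal `I(P_m)` of the vertex-weighted oriented
line graph `P_m` on the first `m` of the variables `x_1, …, x_n` (indexed by `Fin n`,
`x_i` corresponding to the index `i - 1`), generated by the elements
`e_i = x_i x_{i+1}^{w_{i+1}}` for `1 ≤ i ≤ m - 1`. -/
noncomputable def lineEdgeIdeal (k : Type) [Field k] (n : ℕ) (w : Fin n → ℕ) (m : ℕ) :
    Ideal (MvPolynomial (Fin n) k) :=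
  Ideal.span {p : MvPolynomial (Fin n) k |
    ∃ i j : Fin n, (j : ℕ) = (i : ℕ) + 1 ∧ (i : ℕ) + 2 ≤ m ∧ p = X i * X j ^ w j}

/-- `lineSquarefreeIdeal k n w m` is the ideal `I_m` generated by all products
`e_i e_j` of two *distinct* generators of `I(P_m)`, i.e. the minimal generators of
`I(P_m)^2` other than the squares `e_i^2`. -/
noncomputable def lineSquarefreeIdeal (k : Type) [Field k] (n : ℕ) (w : Fin n → ℕ)
    (m : ℕ) : Ideal (MvPolynomial (Fin n) k) :=
  Ideal.span {p : MvPolynomial (Fin n) k |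
    ∃ i j i' j' : Fin n, (j : ℕ) = (i : ℕ) + 1 ∧ (j' : ℕ) = (i' : ℕ) + 1 ∧
      (i : ℕ) < (i' : ℕ) ∧ (i' : ℕ) + 2 ≤ m ∧
      p = (X i * X j ^ w j) * (X i' * X j' ^ w j')}

/-!
Every ideal involved is a monomial ideal, and the colon of the ideal generated by the `x^s`,
`s ∈ A`, by a monomial `x^τ` is generated by the `x^(s - τ)`. Each identity thus reduces to
comparing generators under divisibility, a coordinatewise inequality between the exponent vectors
of the products `e_i e_j`, `e_i` and `x_{n-1}`.
-/

namespace MvPolynomial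

variable {σ R : Type*} [CommSemiring R]

lemma support_mul_monomial_one (p : MvPolynomial σ R) (τ : σ →₀ ℕ) :
    (p * monomial τ 1).support = p.support.map (addRightEmbedding τ) :=
  AddMonoidAlgebra.support_coeff_mul_single p 1 (by simp) τ

lemma span_monomial_le_span_monomial {A B : Set (σ →₀ ℕ)}
    (h : ∀ a ∈ A, ∃ b ∈ B, b ≤ a) :
    Ideal.span ((fun s => monomial s (1 : R)) '' A)
      ≤ Ideal.span ((fun s => monomial s (1 : R)) '' B) := by
  refine Ideal.span_le.mpr ?_
  rintro _ ⟨a, ha, rfl⟩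
  refine mem_ideal_span_monomial_image.mpr fun u hu => ?_
  rw [Finset.mem_singleton.mp (support_monomial_subset hu)]
  exact h a ha

lemma span_monomial_colon_span_monomial (A : Set (σ →₀ ℕ)) (τ : σ →₀ ℕ) :
    (Ideal.span ((fun s => monomial s (1 : R)) '' A)).colon (Ideal.span {monomial τ (1 : R)})
      = Ideal.span ((fun s => monomial s (1 : R)) '' ((· - τ) '' A)) := by
  ext r
  rw [Ideal.mem_colon_span_singleton, mem_ideal_span_monomial_image,
    mem_ideal_span_monomial_image, support_mul_monomial_one]
  simp [tsub_le_iff_right]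

end MvPolynomial

section LineGraph

variable {n : ℕ} (w : Fin n → ℕ)

/-- The exponent vector of `e_i = x_i x_{i+1}^{w_{i+1}}`, for `i` and `j = i + 1`. -/
noncomputable def lineEdgeExponent (i j : Fin n) : Fin n →₀ ℕ :=
  Finsupp.single i 1 + Finsupp.single j (w j)

def lineEdgeExponents (m : ℕ) : Set (Fin n →₀ ℕ) :=
  {s | ∃ i j : Fin n, (j : ℕ) = (i : ℕ) + 1 ∧ (i : ℕ) + 2 ≤ m ∧ s = lineEdgeExponent w i j}

def lineSquarefreeExponents (m : ℕ) : Set (Fin n →₀ ℕ) :=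
  {s | ∃ i j i' j' : Fin n, (j : ℕ) = (i : ℕ) + 1 ∧ (j' : ℕ) = (i' : ℕ) + 1 ∧
      (i : ℕ) < (i' : ℕ) ∧ (i' : ℕ) + 2 ≤ m ∧
      s = lineEdgeExponent w i j + lineEdgeExponent w i' j'}

lemma lineSquarefreeExponents_mono {m m' : ℕ} (h : m ≤ m') :
    lineSquarefreeExponents w m ⊆ lineSquarefreeExponents w m' := by
  rintro _ ⟨i, j, i', j', hj, hj', hii', hi', rfl⟩
  exact ⟨i, j, i', j', hj, hj', hii', hi'.trans h, rfl⟩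

variable (k : Type) [Field k]

lemma X_mul_X_pow_eq_monomial (i j : Fin n) :
    (X i * X j ^ w j : MvPolynomial (Fin n) k) = monomial (lineEdgeExponent w i j) 1 := by
  rw [← pow_one (X i), X_pow_eq_monomial, X_pow_eq_monomial, monomial_mul, one_mul,
    lineEdgeExponent]

lemma lineEdgeIdeal_eq_span_monomial (m : ℕ) :
    lineEdgeIdeal k n w m
      = Ideal.span ((fun s => monomial s (1 : k)) '' lineEdgeExponents w m) := by
  simp only [lineEdgeIdeal, lineEdgeExponents, X_mul_X_pow_eq_monomial]
  congr 1
  ext p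
  constructor
  · rintro ⟨i, j, hj, hi, rfl⟩
    exact ⟨_, ⟨i, j, hj, hi, rfl⟩, rfl⟩
  · rintro ⟨s, ⟨i, j, hj, hi, rfl⟩, rfl⟩
    exact ⟨i, j, hj, hi, rfl⟩

lemma lineSquarefreeIdeal_eq_span_monomial (m : ℕ) :
    lineSquarefreeIdeal k n w m
      = Ideal.span ((fun s => monomial s (1 : k)) '' lineSquarefreeExponents w m) := by
  simp only [lineSquarefreeIdeal, lineSquarefreeExponents, X_mul_X_pow_eq_monomial,
    monomial_mul, one_mul]
  congr 1
  ext p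
  constructor
  · rintro ⟨i, j, i', j', hj, hj', hii', hi', rfl⟩
    exact ⟨_, ⟨i, j, i', j', hj, hj', hii', hi', rfl⟩, rfl⟩
  · rintro ⟨s, ⟨i, j, i', j', hj, hj', hii', hi', rfl⟩, rfl⟩
    exact ⟨i, j, i', j', hj, hj', hii', hi', rfl⟩

lemma lineSquarefreeIdeal_mono {m m' : ℕ} (h : m ≤ m') :
    lineSquarefreeIdeal k n w m ≤ lineSquarefreeIdeal k n w m' := by
  simp only [lineSquarefreeIdeal_eq_span_monomial]
  exact Ideal.span_mono (Set.image_mono (lineSquarefreeExponents_mono w h))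

end LineGraph

section LineGraphCombinatorics

variable {n : ℕ} (w : Fin n → ℕ) {a b : Fin n} (ha : (a : ℕ) = n - 2) (hb : (b : ℕ) = n - 1)
include ha hb

lemma exists_le_tsub_single_of_mem_lineSquarefreeExponents (hwa : 1 ≤ w a) {s : Fin n →₀ ℕ}
    (hs : s ∈ lineSquarefreeExponents w n) :
    ∃ t ∈ lineSquarefreeExponents w (n - 2) ∪ {Finsupp.single a 1},
      t ≤ s - Finsupp.single b (w b) := by
  obtain ⟨i, j, i', j', hj, hj', hii', hi', rfl⟩ := hs
  by_cases hc : (i' : ℕ) + 2 ≤ n - 2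
  · refine ⟨_, Or.inl ⟨i, j, i', j', hj, hj', hii', hc, rfl⟩, Finsupp.le_def.mpr fun c => ?_⟩
    simp only [lineEdgeExponent, Finsupp.tsub_apply, Finsupp.add_apply, Finsupp.single_apply,
      Fin.ext_iff]
    split_ifs <;> omega
  · -- when `j' = a`, the factor `x_a^(w a)` of `e_{i'}` survives the division by `x_b^(w b)`
    have hwj' : (j' : ℕ) = a → 1 ≤ w j' := fun h => (Fin.ext h : j' = a) ▸ hwa
    refine ⟨_, Or.inr rfl, Finsupp.single_le_iff.mpr ?_⟩
    simp only [lineEdgeExponent, Finsupp.tsub_apply, Finsupp.add_apply, Finsupp.single_apply,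
      Fin.ext_iff]
    split_ifs <;> omega

lemma exists_le_tsub_of_mem_lineSquarefreeExponents {s : Fin n →₀ ℕ}
    (hs : s ∈ lineSquarefreeExponents w n) :
    ∃ t ∈ lineEdgeExponents w (n - 1), t ≤ s - lineEdgeExponent w a b := by
  obtain ⟨i, j, i', j', hj, hj', hii', hi', rfl⟩ := hs
  refine ⟨_, ⟨i, j, hj, by omega, rfl⟩, Finsupp.le_def.mpr fun c => ?_⟩
  simp only [lineEdgeExponent, Finsupp.tsub_apply, Finsupp.add_apply, Finsupp.single_apply,
    Fin.ext_iff]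
  split_ifs <;> omega

end LineGraphCombinatorics

section ColonIdentities

variable (k : Type) [Field k] {n : ℕ} (w : Fin n → ℕ) {a b : Fin n}

lemma lineSquarefreeIdeal_sup_span_X_pow (hb : (b : ℕ) = n - 1) :
    lineSquarefreeIdeal k n w n ⊔ Ideal.span {X b ^ w b}
      = lineSquarefreeIdeal k n w (n - 1) ⊔ Ideal.span {X b ^ w b} := by
  refine le_antisymm (sup_le (Ideal.span_le.mpr ?_) le_sup_right)
    (sup_le_sup_right (lineSquarefreeIdeal_mono w k (Nat.sub_le n 1)) _)
  rintro _ ⟨i, j, i', j', hj, hj', hii', hi', rfl⟩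
  by_cases hc : (i' : ℕ) + 2 ≤ n - 1
  · exact Ideal.mem_sup_left (Ideal.subset_span ⟨i, j, i', j', hj, hj', hii', hc, rfl⟩)
  · obtain rfl : j' = b := Fin.ext (by omega)
    exact Ideal.mem_sup_right (Ideal.mem_span_singleton'.mpr ⟨X i * X j ^ w j * X i', by ring⟩)

lemma lineSquarefreeIdeal_colon_X_pow_sup_span_X (ha : (a : ℕ) = n - 2) (hb : (b : ℕ) = n - 1)
    (hwa : 1 ≤ w a) :
    (lineSquarefreeIdeal k n w n).colon (Ideal.span {(X b ^ w b : MvPolynomial (Fin n) k)})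
        ⊔ Ideal.span {X a}
      = lineSquarefreeIdeal k n w (n - 2) ⊔ Ideal.span {X a} := by
  have hXa : Ideal.span {(X a : MvPolynomial (Fin n) k)}
      = Ideal.span ((fun s => monomial s 1) '' {Finsupp.single a 1}) := by
    rw [Set.image_singleton, ← X_pow_eq_monomial, pow_one]
  rw [lineSquarefreeIdeal_eq_span_monomial, lineSquarefreeIdeal_eq_span_monomial,
    X_pow_eq_monomial, span_monomial_colon_span_monomial, hXa, ← Ideal.span_union,
    ← Set.image_union, ← Ideal.span_union, ← Set.image_union]
  apply le_antisymm <;> refine span_monomial_le_span_monomial ?_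
  · rintro _ (⟨s, hs, rfl⟩ | rfl)
    · exact exists_le_tsub_single_of_mem_lineSquarefreeExponents w ha hb hwa hs
    · exact ⟨_, Or.inr rfl, le_rfl⟩
  · rintro t (ht | rfl)
    · exact ⟨_, Or.inl ⟨t, lineSquarefreeExponents_mono w (Nat.sub_le n 2) ht, rfl⟩,
        tsub_le_self⟩
    · exact ⟨_, Or.inr rfl, le_rfl⟩

lemma lineSquarefreeIdeal_colon_eq_lineEdgeIdeal (ha : (a : ℕ) = n - 2) (hb : (b : ℕ) = n - 1) :
    (lineSquarefreeIdeal k n w n).colon (Ideal.span {(X a * X b ^ w b : MvPolynomial (Fin n) k)})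
      = lineEdgeIdeal k n w (n - 1) := by
  rw [X_mul_X_pow_eq_monomial, lineSquarefreeIdeal_eq_span_monomial,
    span_monomial_colon_span_monomial, lineEdgeIdeal_eq_span_monomial]
  apply le_antisymm <;> refine span_monomial_le_span_monomial ?_
  · rintro _ ⟨s, hs, rfl⟩
    exact exists_le_tsub_of_mem_lineSquarefreeExponents w ha hb hs
  · rintro _ ⟨i, j, hj, hi, rfl⟩
    refine ⟨_, ⟨_, ⟨i, j, a, b, hj, by omega, by omega, by omega, rfl⟩, rfl⟩, ?_⟩
    exact (add_tsub_cancel_right _ _).le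

end ColonIdentities

/-- **Lemma.** For `n ≥ 4`, with `e_i = x_i x_{i+1}^{w_{i+1}}`, `I(P_m)` the edge ideal of
the oriented line graph and `I_m = (e_i e_j : 1 ≤ i < j ≤ m - 1)`, where `w_i ≥ 2` for
`2 ≤ i ≤ n - 1` and `w_n ≥ 1`, one has
`(I_n, x_n^{w_n}) = (I_{n-1}, x_n^{w_n})`,
`((I_n : x_n^{w_n}), x_{n-1}) = (I_{n-2}, x_{n-1})` and
`(I_n : x_{n-1} x_n^{w_n}) = I(P_{n-1})`.
(Variables are indexed by `Fin n`, `x_i` corresponding to the index `i - 1`.) -/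
theorem lineSquarefreeIdeal_colon_identities
    (k : Type) [Field k] (n : ℕ) (hn : 4 ≤ n)
    (w : Fin n → ℕ)
    (hw2 : ∀ i : Fin n, 1 ≤ (i : ℕ) → (i : ℕ) ≤ n - 2 → 2 ≤ w i) :
    lineSquarefreeIdeal k n w n
        ⊔ Ideal.span {(X (⟨n - 1, by omega⟩ : Fin n) : MvPolynomial (Fin n) k)
            ^ w ⟨n - 1, by omega⟩}
      = lineSquarefreeIdeal k n w (n - 1)
          ⊔ Ideal.span {(X (⟨n - 1, by omega⟩ : Fin n) : MvPolynomial (Fin n) k)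
              ^ w ⟨n - 1, by omega⟩}
    ∧ (lineSquarefreeIdeal k n w n).colon
          (Ideal.span {(X (⟨n - 1, by omega⟩ : Fin n) : MvPolynomial (Fin n) k)
              ^ w ⟨n - 1, by omega⟩})
        ⊔ Ideal.span {(X (⟨n - 2, by omega⟩ : Fin n) : MvPolynomial (Fin n) k)}
      = lineSquarefreeIdeal k n w (n - 2)
          ⊔ Ideal.span {(X (⟨n - 2, by omega⟩ : Fin n) : MvPolynomial (Fin n) k)}
    ∧ (lineSquarefreeIdeal k n w n).colon
          (Ideal.span {X (⟨n - 2, by omega⟩ : Fin n)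
              * (X (⟨n - 1, by omega⟩ : Fin n) : MvPolynomial (Fin n) k)
                  ^ w ⟨n - 1, by omega⟩})
      = lineEdgeIdeal k n w (n - 1) :=
  ⟨lineSquarefreeIdeal_sup_span_X_pow k w rfl,
    lineSquarefreeIdeal_colon_X_pow_sup_span_X k w rfl rfl
      ((hw2 _ (by dsimp only; omega) le_rfl).trans' one_le_two),
    lineSquarefreeIdeal_colon_eq_lineEdgeIdeal k w rfl rfl⟩
end
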